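/- arXiv:0706.1120 — 5 statements merged into one kernel-verified Lean document; each statement's English description precedes it below -/
import Mathlib

section
/- Suppose m : (0, r₀] → ℝ is differentiable and satisfies the Riccati inequality m' ≤ -m²/(n-1) - Ric(t), where Ric(t) ≥ (n-1)H - f''(t) for a C² function f on [0, r₀]. Let sn_H solve sn_H''+H·sn_H=0, sn_H(0)=0, sn_H'(0)=1, m_H=(n-1)sn_H'/sn_H, and suppose sn_H²(t)·m(t) → 0 and sn_H²(t)·m_H(t) → (n-1)·0 appropriately as t → 0 (i.e., sn_H²·(m - m_H) → 0 as t → 0). Then for all r ∈ (0, r₀] with sn_H > 0 on (0, r]: sn_H²(r)·m(r) ≤ sn_H²(r)·m_H(r) + ∫₀ʳ sn_H²(t)·f''(t) dt. -/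
open Real Set Filter Topology

/-! With `c = n - 1`, the function `g = sn² m - c sn sn' - ∫₀ᵗ sn² f''` has derivative
`-(sn m - c sn')² / c + sn² (m' + m²/c + c H - f'')` (using `sn'' = -H sn`), which is `≤ 0` by
the Riccati inequality and the lower bound on `Ric`; so `g` is antitone on `(0, r]`. Where
`sn ≠ 0`, `g = sn² (m - m_H) - ∫₀ᵗ sn² f''`, so the boundary condition says `g → 0` at `0⁺`,
whence `g r ≤ 0`. -/

theorem AntitoneOn.le_of_tendsto_nhdsGT {β : Type*} [Preorder β] [TopologicalSpace β]
    [OrderClosedTopology β] {g : ℝ → β} {a b : ℝ} {L : β} (hab : a < b)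
    (hg : AntitoneOn g (Ioc a b)) (hlim : Tendsto g (𝓝[>] a) (𝓝 L)) : g b ≤ L :=
  ge_of_tendsto hlim <| by
    filter_upwards [Ioo_mem_nhdsGT hab] with t ht
    exact hg ⟨ht.1, ht.2.le⟩ ⟨hab, le_rfl⟩ ht.2.le

theorem ContinuousOn.hasDerivAt_integral_of_mem_Ioo {φ : ℝ → ℝ} {a b t : ℝ}
    (hφ : ContinuousOn φ (Icc a b)) (ht : t ∈ Ioo a b) :
    HasDerivAt (fun x => ∫ s in a..x, φ s) (φ t) t := by
  have hcont : ∀ x ∈ Ioo a b, ContinuousAt φ x := fun x hx =>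
    hφ.continuousAt (Icc_mem_nhds hx.1 hx.2)
  refine intervalIntegral.integral_hasDerivAt_right ?_
    (ContinuousAt.stronglyMeasurableAtFilter isOpen_Ioo hcont t ht) (hcont t ht)
  exact (hφ.mono (Icc_subset_Icc_right ht.2.le)).intervalIntegrable_of_Icc ht.1.le

theorem ContinuousOn.continuousOn_integral_Icc {φ : ℝ → ℝ} {a b : ℝ}
    (hφ : ContinuousOn φ (Icc a b)) : ContinuousOn (fun x => ∫ s in a..x, φ s) (Icc a b) := by
  rcases le_or_gt a b with hab | hba
  · have hprim := intervalIntegral.continuousOn_primitive_interval (μ := MeasureTheory.volume)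
      (f := φ) (a := a) (b := b) (by rw [uIcc_of_le hab]; exact hφ.integrableOn_Icc)
    rwa [uIcc_of_le hab] at hprim
  · simp [Icc_eq_empty_of_lt hba]

theorem ContinuousOn.tendsto_integral_nhdsGT {φ : ℝ → ℝ} {a b : ℝ} (hab : a < b)
    (hφ : ContinuousOn φ (Icc a b)) :
    Tendsto (fun x => ∫ s in a..x, φ s) (𝓝[>] a) (𝓝 0) := by
  simpa using ((hφ.continuousOn_integral_Icc a (left_mem_Icc.2 hab.le)).mono_of_mem_nhdsWithin
    (Icc_mem_nhdsGT hab)).tendsto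

theorem riccati_comparison_deriv_nonpos {c H s s' m m' F : ℝ} (hc : 0 < c)
    (hm' : m' ≤ -m ^ 2 / c - (c * H - F)) :
    2 * s * s' * m + s ^ 2 * m' - c * (s' * s' + s * (-(H * s))) - s ^ 2 * F ≤ 0 :=
  calc 2 * s * s' * m + s ^ 2 * m' - c * (s' * s' + s * (-(H * s))) - s ^ 2 * F
      = -((s * m - c * s') ^ 2 / c) + s ^ 2 * (m' - (-m ^ 2 / c - (c * H - F))) := by
        field_simp
        ring
    _ ≤ 0 := add_nonpos (neg_nonpos.2 (div_nonneg (sq_nonneg _) hc.le))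
        (mul_nonpos_of_nonneg_of_nonpos (sq_nonneg s) (sub_nonpos.2 hm'))

noncomputable def riccatiComparison (c : ℝ) (sn sn' m F : ℝ → ℝ) (t : ℝ) : ℝ :=
  sn t ^ 2 * m t - c * (sn t * sn' t) - ∫ s in 0..t, sn s ^ 2 * F s

section RiccatiComparison

variable {c H r : ℝ} {sn sn' m m' F : ℝ → ℝ}

theorem continuousOn_sq_mul_of_hasDerivAt (hsn : ∀ x, HasDerivAt sn (sn' x) x)
    (hF : ContinuousOn F (Icc 0 r)) : ContinuousOn (fun s => sn s ^ 2 * F s) (Icc 0 r) :=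
  ((continuous_iff_continuousAt.2 fun x => (hsn x).continuousAt).pow 2).continuousOn.mul hF

theorem antitoneOn_riccatiComparison (hc : 0 < c)
    (hsn : ∀ x, HasDerivAt sn (sn' x) x) (hsn' : ∀ x, HasDerivAt sn' (-(H * sn x)) x)
    (hm : ∀ t ∈ Ioc 0 r, HasDerivAt m (m' t) t) (hF : ContinuousOn F (Icc 0 r))
    (hric : ∀ t ∈ Ioc 0 r, m' t ≤ -(m t) ^ 2 / c - (c * H - F t)) :
    AntitoneOn (riccatiComparison c sn sn' m F) (Ioc 0 r) := by
  have hφ := continuousOn_sq_mul_of_hasDerivAt hsn hF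
  have hmain : ∀ t ∈ Ioc 0 r, HasDerivAt (fun t => sn t ^ 2 * m t - c * (sn t * sn' t))
      (2 * sn t * sn' t * m t + sn t ^ 2 * m' t - c * (sn' t * sn' t + sn t * (-(H * sn t)))) t :=
    fun t ht => ((((hsn t).pow 2).mul (hm t ht)).sub
      (((hsn t).mul (hsn' t)).const_mul c)).congr_deriv (by norm_num)
  refine antitoneOn_of_hasDerivWithinAt_nonpos (convex_Ioc 0 r) ?_ (fun t ht => ?_)
    (fun t ht => riccati_comparison_deriv_nonpos (s := sn t) (s' := sn' t) hc
      (hric t (Ioo_subset_Ioc_self ?_)))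
  · refine ContinuousOn.sub (fun t ht => (hmain t ht).continuousAt.continuousWithinAt) ?_
    exact hφ.continuousOn_integral_Icc.mono Ioc_subset_Icc_self
  · rw [interior_Ioc] at ht
    exact ((hmain t (Ioo_subset_Ioc_self ht)).sub
      (hφ.hasDerivAt_integral_of_mem_Ioo ht)).hasDerivWithinAt
  · rwa [interior_Ioc] at ht

theorem tendsto_riccatiComparison_nhdsGT_zero (hr : 0 < r)
    (hsn : ∀ x, HasDerivAt sn (sn' x) x) (hF : ContinuousOn F (Icc 0 r))
    (hpos : ∀ t ∈ Ioc 0 r, sn t ≠ 0)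
    (hbdry : Tendsto (fun t => sn t ^ 2 * (m t - c * sn' t / sn t)) (𝓝[>] 0) (𝓝 0)) :
    Tendsto (riccatiComparison c sn sn' m F) (𝓝[>] 0) (𝓝 0) := by
  have h := hbdry.sub ((continuousOn_sq_mul_of_hasDerivAt hsn hF).tendsto_integral_nhdsGT hr)
  rw [sub_zero] at h
  refine h.congr' ?_
  filter_upwards [Ioc_mem_nhdsGT hr] with t ht
  simp only [riccatiComparison]
  field_simp [hpos t ht]

end RiccatiComparison

theorem mean_curvature_comparison_core_general (H : ℝ) (n : ℕ) (hn : 2 ≤ n) (r₀ : ℝ)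
    (sn sn' : ℝ → ℝ)
    (hsn : ∀ x, HasDerivAt sn (sn' x) x)
    (hsn' : ∀ x, HasDerivAt sn' (-(H * sn x)) x)
    (m m' : ℝ → ℝ)
    (hm : ∀ t ∈ Ioc (0:ℝ) r₀, HasDerivAt m (m' t) t)
    (Ric : ℝ → ℝ)
    (hric : ∀ t ∈ Ioc (0:ℝ) r₀, m' t ≤ -(m t) ^ 2 / (n - 1 : ℝ) - Ric t)
    (f'' : ℝ → ℝ)
    (hf''cont : ContinuousOn f'' (Icc (0:ℝ) r₀))
    (hRicLower : ∀ t ∈ Ioc (0:ℝ) r₀, Ric t ≥ (n - 1 : ℝ) * H - f'' t)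
    (hbdry : Tendsto (fun t => sn t ^ 2 * (m t - (n - 1 : ℝ) * sn' t / sn t))
      (nhdsWithin 0 (Ioi 0)) (nhds 0)) :
    ∀ r ∈ Ioc (0:ℝ) r₀, (∀ t ∈ Ioc (0:ℝ) r, sn t > 0) →
      sn r ^ 2 * m r ≤ sn r ^ 2 * ((n - 1 : ℝ) * sn' r / sn r)
        + ∫ t in (0:ℝ)..r, sn t ^ 2 * f'' t := by
  rintro r ⟨hr, hrr₀⟩ hpos
  have hc : (0:ℝ) < n - 1 := by
    have : (2:ℝ) ≤ n := by exact_mod_cast hn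
    linarith
  have hsub : Ioc 0 r ⊆ Ioc 0 r₀ := Ioc_subset_Ioc_right hrr₀
  have hF : ContinuousOn f'' (Icc 0 r) := hf''cont.mono (Icc_subset_Icc_right hrr₀)
  have hanti := antitoneOn_riccatiComparison hc hsn hsn' (fun t ht => hm t (hsub ht)) hF
    fun t ht => by linarith [hric t (hsub ht), hRicLower t (hsub ht)]
  have hlim := tendsto_riccatiComparison_nhdsGT_zero hr hsn hF (fun t ht => (hpos t ht).ne') hbdry
  have hgr : riccatiComparison (n - 1) sn sn' m f'' r ≤ 0 := hanti.le_of_tendsto_nhdsGT hr hlim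
  rw [riccatiComparison] at hgr
  rw [show sn r ^ 2 * ((n - 1 : ℝ) * sn' r / sn r) = (n - 1) * (sn r * sn' r) by
    field_simp [(hpos r ⟨hr, le_rfl⟩).ne']]
  linarith

/-- Analytic core of the mean curvature comparison under `Ric_f ≥ (n-1)H`. -/
theorem mean_curvature_comparison_core (H : ℝ) (n : ℕ) (hn : 2 ≤ n) (r₀ : ℝ) (hr₀ : 0 < r₀)
    (sn sn' : ℝ → ℝ)
    (hsn : ∀ x, HasDerivAt sn (sn' x) x)
    (hsn' : ∀ x, HasDerivAt sn' (-(H * sn x)) x)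
    (hsn0 : sn 0 = 0) (hsn0' : sn' 0 = 1)
    (m m' : ℝ → ℝ)
    (hm : ∀ t ∈ Ioc (0:ℝ) r₀, HasDerivAt m (m' t) t)
    (Ric : ℝ → ℝ)
    (hric : ∀ t ∈ Ioc (0:ℝ) r₀, m' t ≤ -(m t) ^ 2 / (n - 1 : ℝ) - Ric t)
    (f f' f'' : ℝ → ℝ)
    (hf : ∀ t ∈ Icc (0:ℝ) r₀, HasDerivAt f (f' t) t)
    (hf' : ∀ t ∈ Icc (0:ℝ) r₀, HasDerivAt f' (f'' t) t)
    (hf''cont : ContinuousOn f'' (Icc (0:ℝ) r₀))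
    (hRicLower : ∀ t ∈ Ioc (0:ℝ) r₀, Ric t ≥ (n - 1 : ℝ) * H - f'' t)
    (hbdry : Tendsto (fun t => sn t ^ 2 * (m t - (n - 1 : ℝ) * sn' t / sn t))
      (nhdsWithin 0 (Ioi 0)) (nhds 0)) :
    ∀ r ∈ Ioc (0:ℝ) r₀, (∀ t ∈ Ioc (0:ℝ) r, sn t > 0) →
      sn r ^ 2 * m r ≤ sn r ^ 2 * ((n - 1 : ℝ) * sn' r / sn r)
        + ∫ t in (0:ℝ)..r, sn t ^ 2 * f'' t :=
  mean_curvature_comparison_core_general H n hn r₀ sn sn' hsn hsn' m m' hm Ric hric f'' hf''cont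
    hRicLower hbdry
end

section
/- Suppose A : (0, R] → ℝ is positive and differentiable with A'/A(r) ≤ m(r) for an integrable function m, and suppose B : (0, R] → ℝ is positive differentiable with B'/B(r) = m(r). Then A/B is nonincreasing on (0, R], and consequently for 0 < r₁ ≤ R₁ ≤ R and r₁ ≤ r ≤ R: (∫_{R₁}^{R} A)·(∫_{r₁}^{r} B) ≤ (∫_{r₁}^{r} A)·(∫_{R₁}^{R} B). -/
open Set MeasureTheory

/-- Zhu's Lemma 3.2: if `A'/A ≤ m = B'/B` with `A, B > 0`, then `A/B` is nonincreasing
and the ratio of integrals over larger annuli is bounded by that over smaller annuli. -/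
theorem ratio_nonincreasing_and_annulus_comparison (R : ℝ) (hR : 0 < R)
    (A A' B B' m : ℝ → ℝ)
    (hApos : ∀ t ∈ Ioc (0:ℝ) R, 0 < A t)
    (hBpos : ∀ t ∈ Ioc (0:ℝ) R, 0 < B t)
    (hA : ∀ t ∈ Ioc (0:ℝ) R, HasDerivAt A (A' t) t)
    (hB : ∀ t ∈ Ioc (0:ℝ) R, HasDerivAt B (B' t) t)
    (hAint : IntegrableOn m (Ioc (0:ℝ) R))
    (hAm : ∀ t ∈ Ioc (0:ℝ) R, A' t / A t ≤ m t)
    (hBm : ∀ t ∈ Ioc (0:ℝ) R, B' t / B t = m t) :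
    (∀ x y, 0 < x → x ≤ y → y ≤ R → A y / B y ≤ A x / B x) ∧
    (∀ r₁ R₁ r : ℝ, 0 < r₁ → r₁ ≤ R₁ → R₁ ≤ R → r₁ ≤ r → r ≤ R →
      (∫ t in R₁..R, A t) * (∫ t in r₁..r, B t)
        ≤ (∫ t in r₁..r, A t) * (∫ t in R₁..R, B t)) := by
  -- derivative of the quotient
  have hf : ∀ t ∈ Ioc (0:ℝ) R, HasDerivAt (fun s => A s / B s)
      ((A' t * B t - A t * B' t) / (B t)^2) t := fun t ht =>
    (hA t ht).div (hB t ht) (hBpos t ht).ne'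
  -- Part 1: A/B is nonincreasing
  have hmono : ∀ x y, 0 < x → x ≤ y → y ≤ R → A y / B y ≤ A x / B x := by
    intro x y hx hxy hyR
    have hsub : Icc x y ⊆ Ioc (0:ℝ) R := fun t ht =>
      ⟨lt_of_lt_of_le hx ht.1, le_trans ht.2 hyR⟩
    have hcont : ContinuousOn (fun s => A s / B s) (Icc x y) := fun t ht =>
      ((hf t (hsub ht)).continuousAt).continuousWithinAt
    have hdiff : DifferentiableOn ℝ (fun s => A s / B s) (interior (Icc x y)) := by
      intro t ht
      rw [interior_Icc] at ht
      exact ((hf t (hsub ⟨le_of_lt ht.1, le_of_lt ht.2⟩)).differentiableAt).differentiableWithinAt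
    have hderiv : ∀ t ∈ interior (Icc x y), deriv (fun s => A s / B s) t ≤ 0 := by
      intro t ht
      rw [interior_Icc] at ht
      have htm : t ∈ Ioc (0:ℝ) R := hsub ⟨le_of_lt ht.1, le_of_lt ht.2⟩
      rw [(hf t htm).deriv]
      apply div_nonpos_of_nonpos_of_nonneg
      · have h1 : A' t / A t ≤ B' t / B t := (hBm t htm) ▸ hAm t htm
        have h2 := (div_le_div_iff₀ (hApos t htm) (hBpos t htm)).mp h1
        linarith
      · positivity
    exact antitoneOn_of_deriv_nonpos (convex_Icc x y) hcont hdiff hderiv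
      ⟨le_refl x, hxy⟩ ⟨hxy, le_refl y⟩ hxy
  refine ⟨hmono, ?_⟩
  -- integrability on subintervals
  have hintA : ∀ a b : ℝ, 0 < a → a ≤ b → b ≤ R → IntervalIntegrable A volume a b := by
    intro a b ha hab hbR
    apply ContinuousOn.intervalIntegrable
    rw [uIcc_of_le hab]
    exact fun t ht => ((hA t ⟨lt_of_lt_of_le ha ht.1, le_trans ht.2 hbR⟩).continuousAt).continuousWithinAt
  have hintB : ∀ a b : ℝ, 0 < a → a ≤ b → b ≤ R → IntervalIntegrable B volume a b := by
    intro a b ha hab hbR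
    apply ContinuousOn.intervalIntegrable
    rw [uIcc_of_le hab]
    exact fun t ht => ((hB t ⟨lt_of_lt_of_le ha ht.1, le_trans ht.2 hbR⟩).continuousAt).continuousWithinAt
  have hBnonneg : ∀ a b : ℝ, 0 < a → a ≤ b → b ≤ R → 0 ≤ ∫ t in a..b, B t := by
    intro a b ha hab hbR
    apply intervalIntegral.integral_nonneg hab
    intro u hu
    exact le_of_lt (hBpos u ⟨lt_of_lt_of_le ha hu.1, le_trans hu.2 hbR⟩)
  -- key lemma for disjoint (ordered) intervals
  have key : ∀ a b c d : ℝ, 0 < a → a ≤ b → b ≤ c → c ≤ d → d ≤ R →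
      (∫ t in c..d, A t) * (∫ t in a..b, B t)
        ≤ (∫ t in a..b, A t) * (∫ t in c..d, B t) := by
    intro a b c d ha hab hbc hcd hdR
    rcases eq_or_lt_of_le hab with rfl | hab'
    · simp
    have hb : (0:ℝ) < b := lt_trans ha hab'
    have hbR : b ≤ R := le_trans hbc (le_trans hcd hdR)
    have hcR : c ≤ R := le_trans hcd hdR
    have hc : (0:ℝ) < c := lt_of_lt_of_le hb hbc
    set k := A b / B b with hk
    have hkpos : 0 < k := div_pos (hApos b ⟨hb, hbR⟩) (hBpos b ⟨hb, hbR⟩)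
    -- on [c,d] : A t ≤ k * B t
    have h1 : (∫ t in c..d, A t) ≤ k * ∫ t in c..d, B t := by
      rw [← intervalIntegral.integral_const_mul]
      apply intervalIntegral.integral_mono_on hcd (hintA c d hc hcd hdR)
        ((hintB c d hc hcd hdR).const_mul k)
      intro t ht
      have htm : t ∈ Ioc (0:ℝ) R := ⟨lt_of_lt_of_le hc ht.1, le_trans ht.2 hdR⟩
      have hft : A t / B t ≤ k := hmono b t hb (le_trans hbc ht.1) htm.2
      calc A t = (A t / B t) * B t := by field_simp [(hBpos t htm).ne']
        _ ≤ k * B t := mul_le_mul_of_nonneg_right hft (le_of_lt (hBpos t htm))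
    -- on [a,b] : k * B s ≤ A s
    have h2 : k * (∫ t in a..b, B t) ≤ ∫ t in a..b, A t := by
      rw [← intervalIntegral.integral_const_mul]
      apply intervalIntegral.integral_mono_on hab
        ((hintB a b ha hab hbR).const_mul k) (hintA a b ha hab hbR)
      intro t ht
      have ht0 : (0:ℝ) < t := lt_of_lt_of_le ha ht.1
      have htm : t ∈ Ioc (0:ℝ) R := ⟨ht0, le_trans ht.2 hbR⟩
      have hft : k ≤ A t / B t := hmono t b ht0 ht.2 hbR
      calc k * B t ≤ (A t / B t) * B t :=
            mul_le_mul_of_nonneg_right hft (le_of_lt (hBpos t htm))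
        _ = A t := by field_simp [(hBpos t htm).ne']
    calc (∫ t in c..d, A t) * (∫ t in a..b, B t)
        ≤ (k * ∫ t in c..d, B t) * (∫ t in a..b, B t) :=
          mul_le_mul_of_nonneg_right h1 (hBnonneg a b ha hab hbR)
      _ = (k * ∫ t in a..b, B t) * (∫ t in c..d, B t) := by ring
      _ ≤ (∫ t in a..b, A t) * (∫ t in c..d, B t) :=
          mul_le_mul_of_nonneg_right h2 (hBnonneg c d hc hcd hdR)
  -- Part 2
  intro r₁ R₁ r hr₁ hr₁R₁ hR₁R hr₁r hrR
  rcases eq_or_lt_of_le hr₁r with rfl | hr₁r'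
  · simp
  rcases eq_or_lt_of_le hR₁R with rfl | hR₁R'
  · simp
  have hr₁R : r₁ ≤ R := le_trans hr₁r hrR
  have hR₁pos : 0 < R₁ := lt_of_lt_of_le hr₁ hr₁R₁
  have hrpos : 0 < r := lt_of_lt_of_le hr₁ hr₁r
  -- split integrals over [r₁, R]
  have hsplitA : (∫ t in r₁..R, A t) = (∫ t in r₁..R₁, A t) + ∫ t in R₁..R, A t :=
    (intervalIntegral.integral_add_adjacent_intervals
      (hintA r₁ R₁ hr₁ hr₁R₁ (le_trans hR₁R le_rfl)) (hintA R₁ R hR₁pos hR₁R le_rfl)).symm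
  have hsplitB : (∫ t in r₁..R, B t) = (∫ t in r₁..R₁, B t) + ∫ t in R₁..R, B t :=
    (intervalIntegral.integral_add_adjacent_intervals
      (hintB r₁ R₁ hr₁ hr₁R₁ (le_trans hR₁R le_rfl)) (hintB R₁ R hR₁pos hR₁R le_rfl)).symm
  have hsplitA' : (∫ t in r₁..R, A t) = (∫ t in r₁..r, A t) + ∫ t in r..R, A t :=
    (intervalIntegral.integral_add_adjacent_intervals
      (hintA r₁ r hr₁ hr₁r hrR) (hintA r R hrpos hrR le_rfl)).symm
  have hsplitB' : (∫ t in r₁..R, B t) = (∫ t in r₁..r, B t) + ∫ t in r..R, B t :=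
    (intervalIntegral.integral_add_adjacent_intervals
      (hintB r₁ r hr₁ hr₁r hrR) (hintB r R hrpos hrR le_rfl)).symm
  -- step 1 : ratio over [R₁,R] ≤ ratio over [r₁,R]
  have step1 : (∫ t in R₁..R, A t) * (∫ t in r₁..R, B t)
      ≤ (∫ t in r₁..R, A t) * (∫ t in R₁..R, B t) := by
    rw [hsplitA, hsplitB]
    have := key r₁ R₁ R₁ R hr₁ hr₁R₁ le_rfl hR₁R le_rfl
    nlinarith [this]
  have step2 : (∫ t in r₁..R, A t) * (∫ t in r₁..r, B t)
      ≤ (∫ t in r₁..r, A t) * (∫ t in r₁..R, B t) := by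
    rw [hsplitA', hsplitB']
    have := key r₁ r r R hr₁ hr₁r le_rfl hrR le_rfl
    nlinarith [this]
  -- combine, dividing by the positive integral of B over [r₁, R]
  have hZpos : 0 < ∫ t in r₁..R, B t := by
    apply intervalIntegral.intervalIntegral_pos_of_pos_on
      (hintB r₁ R hr₁ hr₁R le_rfl)
      (fun t ht => hBpos t ⟨lt_trans hr₁ ht.1, le_of_lt ht.2⟩)
      (lt_of_lt_of_le hr₁r' hrR)
  have hXA_nonneg : 0 ≤ ∫ t in R₁..R, A t := by
    apply intervalIntegral.integral_nonneg hR₁R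
    intro u hu
    exact le_of_lt (hApos u ⟨lt_of_lt_of_le hR₁pos hu.1, hu.2⟩)
  have hXB_nonneg : 0 ≤ ∫ t in R₁..R, B t := hBnonneg R₁ R hR₁pos hR₁R le_rfl
  have hyB_nonneg : 0 ≤ ∫ t in r₁..r, B t := hBnonneg r₁ r hr₁ hr₁r hrR
  have chain : ((∫ t in R₁..R, A t) * (∫ t in r₁..r, B t)) * (∫ t in r₁..R, B t)
      ≤ ((∫ t in r₁..r, A t) * (∫ t in R₁..R, B t)) * (∫ t in r₁..R, B t) := by
    calc ((∫ t in R₁..R, A t) * (∫ t in r₁..r, B t)) * (∫ t in r₁..R, B t)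
        = ((∫ t in R₁..R, A t) * (∫ t in r₁..R, B t)) * (∫ t in r₁..r, B t) := by ring
      _ ≤ ((∫ t in r₁..R, A t) * (∫ t in R₁..R, B t)) * (∫ t in r₁..r, B t) :=
          mul_le_mul_of_nonneg_right step1 hyB_nonneg
      _ = ((∫ t in r₁..R, A t) * (∫ t in r₁..r, B t)) * (∫ t in R₁..R, B t) := by ring
      _ ≤ ((∫ t in r₁..r, A t) * (∫ t in r₁..R, B t)) * (∫ t in R₁..R, B t) :=
          mul_le_mul_of_nonneg_right step2 hXB_nonneg
      _ = ((∫ t in r₁..r, A t) * (∫ t in R₁..R, B t)) * (∫ t in r₁..R, B t) := by ring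
  exact le_of_mul_le_mul_right chain hZpos
end

section
/- Suppose ψ : (0, r₀] → ℝ is differentiable and satisfies ψ'(r) + (2/r + (2/(n-1))f'(r))·ψ(r) ≤ 4(n-1)/r² on (0, r₀], where f is C¹ with |f| ≤ k, and r²·e^{(2/(n-1))f(r)}·ψ(r) → 0 as r → 0⁺. Then ψ(r) ≤ 4(n-1)·e^{4k/(n-1)}/r for all r ∈ (0, r₀]. -/
open Real Set Filter

/-!
Multiplying the inequality by the integrating factor `t² e^{c f(t)}`, `c = 2/(n-1)`, turns its left
side into the derivative of `g(t) = t² e^{c f(t)} ψ(t)` and its right side into at most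
`4(n-1) e^{c k}`. Since `g → 0` at `0⁺`, the mean value theorem gives `g(r) ≤ 4(n-1) e^{c k} r`, and
dividing by `r² e^{c f(r)} ≥ r² e^{-c k}` yields the bound, as `2 c k = 4k/(n-1)`.
-/

theorem sub_le_mul_sub_of_hasDerivAt_le_of_tendsto_nhdsGT {g g' : ℝ → ℝ} {a b C L : ℝ}
    (hab : a < b) (hg : ∀ t ∈ Ioc a b, HasDerivAt g (g' t) t) (hg' : ∀ t ∈ Ioc a b, g' t ≤ C)
    (hlim : Tendsto g (nhdsWithin a (Ioi a)) (nhds L)) :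
    g b - L ≤ C * (b - a) := by
  have hmvt : ∀ x ∈ Ioc a b, g b - g x ≤ C * (b - x) := by
    intro x hx
    refine (convex_Ioc a b).image_sub_le_mul_sub_of_deriv_le
      (fun t ht => (hg t ht).continuousAt.continuousWithinAt) ?_ ?_ x hx b ⟨hab, le_rfl⟩ hx.2
    · rw [interior_Ioc]
      exact fun t ht => (hg t (Ioo_subset_Ioc_self ht)).differentiableAt.differentiableWithinAt
    · rw [interior_Ioc]
      exact fun t ht => (hg t (Ioo_subset_Ioc_self ht)).deriv ▸ hg' t (Ioo_subset_Ioc_self ht)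
  have hright : Tendsto (fun x => C * (b - x)) (nhdsWithin a (Ioi a)) (nhds (C * (b - a))) :=
    ((continuous_const.mul (continuous_const.sub continuous_id)).tendsto a).mono_left
      nhdsWithin_le_nhds
  refine le_of_tendsto_of_tendsto (tendsto_const_nhds.sub hlim) hright ?_
  filter_upwards [Ioo_mem_nhdsGT hab] with x hx
  exact hmvt x (Ioo_subset_Ioc_self hx)

theorem hasDerivAt_sq_mul_exp_mul_mul {f ψ : ℝ → ℝ} {f' ψ' t : ℝ} (c : ℝ) (ht : t ≠ 0)
    (hf : HasDerivAt f f' t) (hψ : HasDerivAt ψ ψ' t) :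
    HasDerivAt (fun s => s ^ 2 * exp (c * f s) * ψ s)
      (t ^ 2 * exp (c * f t) * (ψ' + (2 / t + c * f') * ψ t)) t := by
  have hweight : HasDerivAt (fun s => s ^ 2 * exp (c * f s))
      (2 * t * exp (c * f t) + t ^ 2 * (exp (c * f t) * (c * f'))) t := by
    simpa using (hasDerivAt_pow 2 t).fun_mul (hf.const_mul c).exp
  refine (hweight.fun_mul hψ).congr_deriv ?_
  field_simp
  ring

theorem le_mul_exp_div_of_sq_mul_mul_le {x e M a r : ℝ} (hr : 0 < r) (hM : 0 ≤ M)
    (he : exp (-a) ≤ e) (hx : r ^ 2 * e * x ≤ M * r) :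
    x ≤ M * exp a / r := by
  have he0 : 0 < e := (exp_pos _).trans_le he
  calc x ≤ M / (r * e) := by
        rw [le_div_iff₀ (by positivity)]
        nlinarith
    _ ≤ M / (r * exp (-a)) := by gcongr
    _ = M * exp a / r := by
        rw [exp_neg]
        field_simp

theorem ode_error_estimate_H_zero_general (n : ℕ) (hn : 2 ≤ n) (k r₀ : ℝ)
    (ψ ψ' f f' : ℝ → ℝ)
    (hψ : ∀ t ∈ Ioc (0:ℝ) r₀, HasDerivAt ψ (ψ' t) t)
    (hf : ∀ t ∈ Icc (0:ℝ) r₀, HasDerivAt f (f' t) t)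
    (hfbd : ∀ t ∈ Icc (0:ℝ) r₀, |f t| ≤ k)
    (hineq : ∀ t ∈ Ioc (0:ℝ) r₀,
      ψ' t + (2 / t + (2 / (n - 1 : ℝ)) * f' t) * ψ t ≤ 4 * (n - 1 : ℝ) / t ^ 2)
    (hbdry : Tendsto (fun t => t ^ 2 * Real.exp ((2 / (n - 1 : ℝ)) * f t) * ψ t)
      (nhdsWithin 0 (Ioi 0)) (nhds 0)) :
    ∀ r ∈ Ioc (0:ℝ) r₀, ψ r ≤ 4 * (n - 1 : ℝ) * Real.exp (4 * k / (n - 1 : ℝ)) / r := by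
  intro r hr
  have hn1 : (0 : ℝ) < n - 1 := by
    have : (2 : ℝ) ≤ n := by exact_mod_cast hn
    linarith
  set c : ℝ := 2 / (n - 1 : ℝ)
  have hc : 0 ≤ c := by positivity
  have hsub : Ioc 0 r ⊆ Ioc 0 r₀ := Ioc_subset_Ioc_right hr.2
  have hslope : ∀ t ∈ Ioc (0:ℝ) r,
      t ^ 2 * exp (c * f t) * (ψ' t + (2 / t + c * f' t) * ψ t) ≤ 4 * (n - 1) * exp (c * k) :=
    fun t ht => calc
      _ ≤ t ^ 2 * exp (c * f t) * (4 * (n - 1) / t ^ 2) := by gcongr; exact hineq t (hsub ht)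
      _ = 4 * (n - 1) * exp (c * f t) := by field_simp [ht.1.ne']
      _ ≤ 4 * (n - 1) * exp (c * k) := by
        gcongr; exact (abs_le.mp (hfbd t (Ioc_subset_Icc_self (hsub ht)))).2
  have hgr : r ^ 2 * exp (c * f r) * ψ r ≤ 4 * (n - 1) * exp (c * k) * r := by
    simpa using sub_le_mul_sub_of_hasDerivAt_le_of_tendsto_nhdsGT hr.1
      (fun t ht => hasDerivAt_sq_mul_exp_mul_mul c ht.1.ne'
        (hf t (Ioc_subset_Icc_self (hsub ht))) (hψ t (hsub ht))) hslope hbdry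
  have hlower : exp (-(c * k)) ≤ exp (c * f r) :=
    exp_le_exp.mpr (by nlinarith [(abs_le.mp (hfbd r (Ioc_subset_Icc_self hr))).1])
  have hψr := le_mul_exp_div_of_sq_mul_mul_le hr.1 (by positivity) hlower hgr
  rwa [mul_assoc, ← exp_add, show c * k + c * k = 4 * k / (n - 1) by ring] at hψr

/-- ODE mean curvature error estimate, `H = 0` case. -/
theorem ode_error_estimate_H_zero (n : ℕ) (hn : 2 ≤ n) (k r₀ : ℝ) (hk : 0 ≤ k) (hr₀ : 0 < r₀)
    (ψ ψ' f f' : ℝ → ℝ)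
    (hψ : ∀ t ∈ Ioc (0:ℝ) r₀, HasDerivAt ψ (ψ' t) t)
    (hf : ∀ t ∈ Icc (0:ℝ) r₀, HasDerivAt f (f' t) t)
    (hf'cont : ContinuousOn f' (Icc (0:ℝ) r₀))
    (hfbd : ∀ t ∈ Icc (0:ℝ) r₀, |f t| ≤ k)
    (hineq : ∀ t ∈ Ioc (0:ℝ) r₀,
      ψ' t + (2 / t + (2 / (n - 1 : ℝ)) * f' t) * ψ t ≤ 4 * (n - 1 : ℝ) / t ^ 2)
    (hbdry : Tendsto (fun t => t ^ 2 * Real.exp ((2 / (n - 1 : ℝ)) * f t) * ψ t)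
      (nhdsWithin 0 (Ioi 0)) (nhds 0)) :
    ∀ r ∈ Ioc (0:ℝ) r₀, ψ r ≤ 4 * (n - 1 : ℝ) * Real.exp (4 * k / (n - 1 : ℝ)) / r :=
  ode_error_estimate_H_zero_general n hn k r₀ ψ ψ' f f' hψ hf hfbd hineq hbdry
end

section
/- Suppose m : (0, L) → ℝ is differentiable, H > 0, N > 1, m'(r) ≤ -m(r)²/(N-1) - (N-1)H for all r ∈ (0, L), and (N-1)√H·cot(√H r) - m(r) → 0 as r → 0⁺. Then m(r) ≤ (N-1)√H·cot(√H r) for all r ∈ (0, min(L, π/√H)). -/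
open Real Set Filter

/-- Sturm–Liouville/Riccati comparison for the N-Bakry-Emery mean curvature. -/
theorem riccati_comparison_N_Bakry_Emery (N H L : ℝ) (hN : 1 < N) (hH : 0 < H) (hL : 0 < L)
    (m m' : ℝ → ℝ)
    (hm : ∀ t ∈ Ioo (0:ℝ) L, HasDerivAt m (m' t) t)
    (hineq : ∀ t ∈ Ioo (0:ℝ) L, m' t ≤ -(m t) ^ 2 / (N - 1) - (N - 1) * H)
    (hbdry : Tendsto (fun r => (N - 1) * Real.sqrt H *
        (Real.cos (Real.sqrt H * r) / Real.sin (Real.sqrt H * r)) - m r)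
      (nhdsWithin 0 (Ioi 0)) (nhds 0)) :
    ∀ r ∈ Ioo (0:ℝ) (min L (Real.pi / Real.sqrt H)),
      m r ≤ (N - 1) * Real.sqrt H *
        (Real.cos (Real.sqrt H * r) / Real.sin (Real.sqrt H * r)) := by
  intro r hr
  set s : ℝ := Real.sqrt H with hs_def
  have hs : 0 < s := Real.sqrt_pos.mpr hH
  have hs2 : s ^ 2 = H := Real.sq_sqrt hH.le
  have hN1 : (0:ℝ) < N - 1 := by linarith
  set R : ℝ := min L (Real.pi / s) with hR_def
  obtain ⟨hr0, hrR⟩ := hr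
  set M : ℝ → ℝ := fun t => (N - 1) * s * (Real.cos (s * t) / Real.sin (s * t)) with hM_def
  have hIoo : Ioo (0:ℝ) R ⊆ Ioo (0:ℝ) L := Ioo_subset_Ioo le_rfl (min_le_left _ _)
  have hsin : ∀ t ∈ Ioo (0:ℝ) R, 0 < Real.sin (s * t) := by
    intro t ht
    apply Real.sin_pos_of_pos_of_lt_pi (mul_pos hs ht.1)
    have h1 : t < Real.pi / s := lt_of_lt_of_le ht.2 (min_le_right _ _)
    calc s * t < s * (Real.pi / s) := by
          exact mul_lt_mul_of_pos_left h1 hs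
      _ = Real.pi := by field_simp
  -- derivative of the model function M, satisfying the Riccati equation with equality
  have hMd : ∀ t ∈ Ioo (0:ℝ) R,
      HasDerivAt M (-(M t) ^ 2 / (N - 1) - (N - 1) * H) t := by
    intro t ht
    have h0 : Real.sin (s * t) ≠ 0 := (hsin t ht).ne'
    have hin : HasDerivAt (fun x : ℝ => s * x) s t := by
      simpa using (hasDerivAt_id t).const_mul s
    have hcos : HasDerivAt (fun x => Real.cos (s * x)) (-Real.sin (s * t) * s) t :=
      (Real.hasDerivAt_cos (s * t)).comp t hin
    have hsin' : HasDerivAt (fun x => Real.sin (s * x)) (Real.cos (s * t) * s) t :=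
      (Real.hasDerivAt_sin (s * t)).comp t hin
    have hdiv := (hcos.div hsin' h0).const_mul ((N - 1) * s)
    refine hdiv.congr_deriv ?_
    have h1 := Real.sin_sq_add_cos_sq (s * t)
    rw [← hs2]
    simp only [hM_def]
    field_simp
    ring_nf
  -- continuity of the integrand
  set f : ℝ → ℝ := fun x => (m x + M x) / (N - 1) with hf_def
  have hfc : ContinuousOn f (Ioo (0:ℝ) R) := by
    intro x hx
    exact (((hm x (hIoo hx)).continuousAt.add (hMd x hx).continuousAt).div_const _).continuousWithinAt
  -- M tends to +∞ at 0⁺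
  have hMtop : Tendsto M (nhdsWithin 0 (Ioi 0)) atTop := by
    have hmem : Ioo (0:ℝ) (Real.pi / s) ∈ nhdsWithin (0:ℝ) (Ioi 0) :=
      Ioo_mem_nhdsGT_of_mem ⟨le_rfl, div_pos Real.pi_pos hs⟩
    have h1 : Tendsto (fun t => Real.sin (s * t)) (nhdsWithin 0 (Ioi 0))
        (nhdsWithin 0 (Ioi 0)) := by
      rw [tendsto_nhdsWithin_iff]
      constructor
      · have : Tendsto (fun t : ℝ => Real.sin (s * t)) (nhds 0) (nhds 0) := by
          have hcont : Continuous (fun t : ℝ => Real.sin (s * t)) := Real.continuous_sin.comp (continuous_mul_left s)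
          have := hcont.tendsto 0
          simpa using this
        exact this.mono_left nhdsWithin_le_nhds
      · filter_upwards [hmem] with t ht
        apply Real.sin_pos_of_pos_of_lt_pi (mul_pos hs ht.1)
        calc s * t < s * (Real.pi / s) := mul_lt_mul_of_pos_left ht.2 hs
          _ = Real.pi := by field_simp
    have hinv : Tendsto (fun t => (Real.sin (s * t))⁻¹) (nhdsWithin 0 (Ioi 0)) atTop :=
      tendsto_inv_nhdsGT_zero.comp h1
    have hcos1 : Tendsto (fun t => Real.cos (s * t)) (nhdsWithin 0 (Ioi 0)) (nhds 1) := by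
      have : Tendsto (fun t : ℝ => Real.cos (s * t)) (nhds 0) (nhds 1) := by
        have hcont : Continuous (fun t : ℝ => Real.cos (s * t)) := Real.continuous_cos.comp (continuous_mul_left s)
        have := hcont.tendsto 0
        simpa using this
      exact this.mono_left nhdsWithin_le_nhds
    have hcot : Tendsto (fun t => Real.cos (s * t) / Real.sin (s * t))
        (nhdsWithin 0 (Ioi 0)) atTop := by
      simp only [div_eq_mul_inv]
      exact hcos1.pos_mul_atTop one_pos hinv
    exact hcot.const_mul_atTop (by positivity)
  -- eventually m + M ≥ 0 near 0⁺
  have hev : ∀ᶠ t in nhdsWithin (0:ℝ) (Ioi 0), 0 ≤ m t + M t := by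
    filter_upwards [hMtop.eventually_ge_atTop 1,
      hbdry.eventually_lt_const (show (0:ℝ) < 1 by norm_num)] with t h1 h2
    simp only [hM_def] at h1 h2 ⊢
    linarith
  obtain ⟨δ, hδ0, hδ⟩ : ∃ δ > 0, ∀ t ∈ Ioo (0:ℝ) δ, 0 ≤ m t + M t := by
    rcases Metric.mem_nhdsWithin_iff.mp hev with ⟨ε, hε, hball⟩
    refine ⟨ε, hε, fun t ht => hball ⟨?_, ht.1⟩⟩
    simp [Real.dist_eq, abs_of_pos ht.1, ht.2]
  -- base point
  set δ' : ℝ := min δ r with hδ'_def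
  have hδ'0 : 0 < δ' := lt_min hδ0 hr0
  set c : ℝ := δ' / 2 with hc_def
  have hc0 : 0 < c := by positivity
  have hcr : c < r := by
    have : δ' ≤ r := min_le_right _ _
    simp only [hc_def]; linarith
  have hcR : c ∈ Ioo (0:ℝ) R := ⟨hc0, hcr.trans hrR⟩
  have hδ'R : δ' ≤ R := le_trans (min_le_right _ _) hrR.le
  -- the integrating factor exponent
  set G : ℝ → ℝ := fun t => ∫ x in c..t, f x with hG_def
  have hGd : ∀ t ∈ Ioo (0:ℝ) R, HasDerivAt G (f t) t := by
    intro t ht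
    have hsub : uIcc c t ⊆ Ioo (0:ℝ) R := (ordConnected_Ioo).uIcc_subset hcR ht
    have hint : IntervalIntegrable f MeasureTheory.volume c t :=
      (hfc.mono hsub).intervalIntegrable
    exact intervalIntegral.integral_hasDerivAt_right hint
      (hfc.stronglyMeasurableAtFilter isOpen_Ioo t ht)
      (hfc.continuousAt (isOpen_Ioo.mem_nhds ht))
  -- the comparison function
  set F : ℝ → ℝ := fun t => (m t - M t) * Real.exp (G t) with hF_def
  have hFd : ∀ t ∈ Ioo (0:ℝ) R, HasDerivAt F
      (((m' t - (-(M t) ^ 2 / (N - 1) - (N - 1) * H)) +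
        (m t - M t) * f t) * Real.exp (G t)) t := by
    intro t ht
    have h1 := (hm t (hIoo ht)).sub (hMd t ht)
    have h2 := (hGd t ht).exp
    have h3 := h1.mul h2
    refine h3.congr_deriv ?_
    simp only [Pi.sub_apply]
    ring
  have hFd_nonpos : ∀ t ∈ Ioo (0:ℝ) R,
      ((m' t - (-(M t) ^ 2 / (N - 1) - (N - 1) * H)) +
        (m t - M t) * f t) * Real.exp (G t) ≤ 0 := by
    intro t ht
    have h := hineq t (hIoo ht)
    have e1 : (m t - M t) * f t = (m t) ^ 2 / (N - 1) - (M t) ^ 2 / (N - 1) := by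
      simp only [hf_def]
      ring
    have key : (m' t - (-(M t) ^ 2 / (N - 1) - (N - 1) * H)) + (m t - M t) * f t ≤ 0 := by
      rw [e1]
      have h2 : -(m t) ^ 2 / (N - 1) = -((m t) ^ 2 / (N - 1)) := by ring
      rw [h2] at h
      have h3 : -(M t) ^ 2 / (N - 1) = -((M t) ^ 2 / (N - 1)) := by ring
      rw [h3]
      linarith
    exact mul_nonpos_of_nonpos_of_nonneg key (Real.exp_nonneg _)
  -- F is antitone on (0, R)
  have hFanti : AntitoneOn F (Ioo (0:ℝ) R) := by
    apply antitoneOn_of_deriv_nonpos (convex_Ioo _ _)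
    · intro x hx
      exact (hFd x hx).continuousAt.continuousWithinAt
    · rw [interior_Ioo]
      intro x hx
      exact ((hFd x hx).differentiableAt).differentiableWithinAt
    · rw [interior_Ioo]
      intro x hx
      rw [(hFd x hx).deriv]
      exact hFd_nonpos x hx
  -- G is monotone on (0, δ')
  have hsub' : Ioo (0:ℝ) δ' ⊆ Ioo (0:ℝ) R := Ioo_subset_Ioo le_rfl hδ'R
  have hGmono : MonotoneOn G (Ioo (0:ℝ) δ') := by
    apply monotoneOn_of_deriv_nonneg (convex_Ioo _ _)
    · intro x hx
      exact (hGd x (hsub' hx)).continuousAt.continuousWithinAt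
    · rw [interior_Ioo]
      intro x hx
      exact ((hGd x (hsub' hx)).differentiableAt).differentiableWithinAt
    · rw [interior_Ioo]
      intro x hx
      rw [(hGd x (hsub' hx)).deriv]
      have hx' : x ∈ Ioo (0:ℝ) δ := Ioo_subset_Ioo le_rfl (min_le_left _ _) hx
      have := hδ x hx'
      simp only [hf_def]
      positivity
  have hGc : G c = 0 := by simp [hG_def]
  -- F tends to 0 at 0⁺
  have hu0 : Tendsto (fun t => m t - M t) (nhdsWithin 0 (Ioi 0)) (nhds 0) := by
    have h := hbdry.neg
    simp only [neg_sub, neg_zero] at h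
    exact h
  have hF0 : Tendsto F (nhdsWithin 0 (Ioi 0)) (nhds 0) := by
    apply squeeze_zero_norm' (a := fun t => |m t - M t|)
    · filter_upwards [Ioo_mem_nhdsGT_of_mem (show (0:ℝ) ∈ Ico (0:ℝ) c from ⟨le_rfl, hc0⟩)]
        with t ht
      have htδ' : t ∈ Ioo (0:ℝ) δ' := ⟨ht.1, by simp only [hc_def] at ht; linarith [ht.2]⟩
      have hcδ' : c ∈ Ioo (0:ℝ) δ' := ⟨hc0, by simp only [hc_def]; linarith⟩
      have hGle : G t ≤ G c := hGmono htδ' hcδ' ht.2.le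
      have hexp : Real.exp (G t) ≤ 1 := by
        rw [← Real.exp_zero, ← hGc]
        exact Real.exp_le_exp.mpr (hGc ▸ hGle)
      simp only [hF_def, Real.norm_eq_abs, abs_mul, Real.abs_exp]
      calc |m t - M t| * Real.exp (G t) ≤ |m t - M t| * 1 :=
            mul_le_mul_of_nonneg_left hexp (abs_nonneg _)
        _ = |m t - M t| := mul_one _
    · have := hu0.abs
      simpa using this
  -- conclude
  have hrmem : r ∈ Ioo (0:ℝ) R := ⟨hr0, hrR⟩
  have hFr : F r ≤ 0 := by
    refine ge_of_tendsto hF0 ?_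
    filter_upwards [Ioo_mem_nhdsGT_of_mem (show (0:ℝ) ∈ Ico (0:ℝ) r from ⟨le_rfl, hr0⟩)]
      with t ht
    exact hFanti ⟨ht.1, ht.2.trans hrR⟩ hrmem ht.2.le
  have hur : m r - M r ≤ 0 := by
    by_contra hcon
    push_neg at hcon
    have := mul_pos hcon (Real.exp_pos (G r))
    simp only [hF_def] at hFr
    linarith
  simp only [hM_def] at hur
  linarith
end

section
/- Suppose ψ : (0, r₀] → ℝ is differentiable, satisfies ψ' + ((2 sn_H'/sn_H) + (2/(n-1))f')·ψ ≤ 4(n-1)·(sn_H'/sn_H)² on (0, r₀] where sn_H > 0 and f is C¹ with |f| ≤ k, and sn_H²(r)e^{(2/(n-1))f(r)}ψ(r) → 0 as r → 0⁺. Then sn_H²(r)·e^{(2/(n-1))f(r)}·ψ(r) ≤ 4(n-1)·∫₀ʳ e^{(2/(n-1))f(t)}·(sn_H'(t))² dt for all r ∈ (0, r₀]. -/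
/-!
Multiplied by the positive integrating factor `sn² e^{c f}` with `c = 2/(n-1)`, the left side of
the differential inequality becomes the derivative of `sn² e^{c f} ψ` and the right side becomes
`4(n-1) e^{c f} sn'²`. Integrating over `[ε, r]` and letting `ε → 0⁺`, where the boundary term
vanishes, gives the estimate.
-/

open Real Set Filter Topology MeasureTheory

theorem sub_le_integral_of_hasDerivAt_le_of_tendsto {G G' g : ℝ → ℝ} {a b L : ℝ} (hab : a < b)
    (hG : ∀ t ∈ Ioc a b, HasDerivAt G (G' t) t) (hg : IntegrableOn g (Icc a b))
    (hle : ∀ t ∈ Ioo a b, G' t ≤ g t) (hlim : Tendsto G (𝓝[>] a) (𝓝 L)) :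
    G b - L ≤ ∫ t in a..b, g t := by
  have hstep : ∀ ε ∈ Ioo a b, G b - G ε ≤ ∫ t in ε..b, g t := fun ε hε =>
    intervalIntegral.sub_le_integral_of_hasDeriv_right_of_le hε.2.le
      (fun t ht => (hG t ⟨hε.1.trans_le ht.1, ht.2⟩).continuousAt.continuousWithinAt)
      (fun t ht => (hG t ⟨hε.1.trans ht.1, ht.2.le⟩).hasDerivWithinAt)
      (hg.mono_set (Icc_subset_Icc_left hε.1.le)) (fun t ht => hle t ⟨hε.1.trans ht.1, ht.2⟩)
  have hprimitive : Tendsto (fun ε => ∫ t in ε..b, g t) (𝓝[>] a) (𝓝 (∫ t in a..b, g t)) := by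
    have hcont := intervalIntegral.continuousOn_primitive_interval_left
      (b := b) (μ := volume) (by rwa [uIcc_of_le hab.le])
    rw [uIcc_of_le hab.le] at hcont
    rw [← nhdsWithin_Ioc_eq_nhdsGT hab]
    exact (hcont a (left_mem_Icc.2 hab.le)).mono_left (nhdsWithin_mono _ Ioc_subset_Icc_self)
  refine le_of_tendsto_of_tendsto (tendsto_const_nhds.sub hlim) hprimitive ?_
  filter_upwards [Ioo_mem_nhdsGT hab] with ε hε using hstep ε hε

theorem hasDerivAt_sq_mul_exp_mul {s f ψ : ℝ → ℝ} {s' f' ψ' c t : ℝ}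
    (hs : HasDerivAt s s' t) (hf : HasDerivAt f f' t) (hψ : HasDerivAt ψ ψ' t) (hst : s t ≠ 0) :
    HasDerivAt (fun x => s x ^ 2 * exp (c * f x) * ψ x)
      (s t ^ 2 * exp (c * f t) * (ψ' + (2 * s' / s t + c * f') * ψ t)) t := by
  refine (((hs.fun_pow 2).fun_mul (hf.const_mul c).exp).fun_mul hψ).congr_deriv ?_
  field_simp
  ring

theorem integrating_factor_estimate_general (H : ℝ) (n : ℕ) (r₀ : ℝ)
    (sn sn' : ℝ → ℝ)
    (hsn : ∀ x, HasDerivAt sn (sn' x) x)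
    (hsn' : ∀ x, HasDerivAt sn' (-(H * sn x)) x)
    (hsnpos : ∀ t ∈ Ioc (0:ℝ) r₀, 0 < sn t)
    (ψ ψ' f f' : ℝ → ℝ)
    (hψ : ∀ t ∈ Ioc (0:ℝ) r₀, HasDerivAt ψ (ψ' t) t)
    (hf : ∀ t ∈ Icc (0:ℝ) r₀, HasDerivAt f (f' t) t)
    (hineq : ∀ t ∈ Ioc (0:ℝ) r₀,
      ψ' t + (2 * sn' t / sn t + (2 / (n - 1 : ℝ)) * f' t) * ψ t
        ≤ 4 * (n - 1 : ℝ) * (sn' t / sn t) ^ 2)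
    (hbdry : Tendsto (fun t => sn t ^ 2 * Real.exp ((2 / (n - 1 : ℝ)) * f t) * ψ t)
      (nhdsWithin 0 (Ioi 0)) (nhds 0)) :
    ∀ r ∈ Ioc (0:ℝ) r₀,
      sn r ^ 2 * Real.exp ((2 / (n - 1 : ℝ)) * f r) * ψ r
        ≤ 4 * (n - 1 : ℝ) *
            ∫ t in (0:ℝ)..r, Real.exp ((2 / (n - 1 : ℝ)) * f t) * (sn' t) ^ 2 := by
  intro r hr
  set c : ℝ := 2 / (n - 1 : ℝ)
  have hsub : Ioc 0 r ⊆ Ioc 0 r₀ := Ioc_subset_Ioc_right hr.2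
  have hcont : ContinuousOn (fun t => 4 * (n - 1 : ℝ) * (exp (c * f t) * sn' t ^ 2)) (Icc 0 r) :=
    fun t ht => ((((hf t ⟨ht.1, ht.2.trans hr.2⟩).continuousAt.const_mul c).rexp.mul
      ((hsn' t).continuousAt.pow 2)).const_mul _).continuousWithinAt
  have hderiv (t : ℝ) (ht : t ∈ Ioc 0 r) := hasDerivAt_sq_mul_exp_mul (c := c) (hsn t)
    (hf t (Ioc_subset_Icc_self (hsub ht))) (hψ t (hsub ht)) (hsnpos t (hsub ht)).ne'
  have hle : ∀ t ∈ Ioo 0 r, sn t ^ 2 * exp (c * f t) * (ψ' t + (2 * sn' t / sn t + c * f' t) * ψ t)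
      ≤ 4 * (n - 1 : ℝ) * (exp (c * f t) * sn' t ^ 2) := by
    intro t ht
    have hst : 0 < sn t := hsnpos t (hsub (Ioo_subset_Ioc_self ht))
    calc _ ≤ sn t ^ 2 * exp (c * f t) * (4 * (n - 1 : ℝ) * (sn' t / sn t) ^ 2) :=
          mul_le_mul_of_nonneg_left (hineq t (hsub (Ioo_subset_Ioc_self ht))) (by positivity)
      _ = _ := by field_simp
  have key := sub_le_integral_of_hasDerivAt_le_of_tendsto hr.1 hderiv
    (hcont.integrableOn_Icc (μ := volume)) hle hbdry
  rwa [sub_zero, intervalIntegral.integral_const_mul] at key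

/-- Integrating-factor step in the ODE proof of the mean curvature comparison (part b). -/
theorem integrating_factor_estimate (H : ℝ) (n : ℕ) (hn : 2 ≤ n) (k r₀ : ℝ)
    (hk : 0 ≤ k) (hr₀ : 0 < r₀)
    (sn sn' : ℝ → ℝ)
    (hsn : ∀ x, HasDerivAt sn (sn' x) x)
    (hsn' : ∀ x, HasDerivAt sn' (-(H * sn x)) x)
    (hsn0 : sn 0 = 0) (hsn0' : sn' 0 = 1)
    (hsnpos : ∀ t ∈ Ioc (0:ℝ) r₀, 0 < sn t)
    (ψ ψ' f f' : ℝ → ℝ)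
    (hψ : ∀ t ∈ Ioc (0:ℝ) r₀, HasDerivAt ψ (ψ' t) t)
    (hf : ∀ t ∈ Icc (0:ℝ) r₀, HasDerivAt f (f' t) t)
    (hf'cont : ContinuousOn f' (Icc (0:ℝ) r₀))
    (hfbd : ∀ t ∈ Icc (0:ℝ) r₀, |f t| ≤ k)
    (hineq : ∀ t ∈ Ioc (0:ℝ) r₀,
      ψ' t + (2 * sn' t / sn t + (2 / (n - 1 : ℝ)) * f' t) * ψ t
        ≤ 4 * (n - 1 : ℝ) * (sn' t / sn t) ^ 2)
    (hbdry : Tendsto (fun t => sn t ^ 2 * Real.exp ((2 / (n - 1 : ℝ)) * f t) * ψ t)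
      (nhdsWithin 0 (Ioi 0)) (nhds 0)) :
    ∀ r ∈ Ioc (0:ℝ) r₀,
      sn r ^ 2 * Real.exp ((2 / (n - 1 : ℝ)) * f r) * ψ r
        ≤ 4 * (n - 1 : ℝ) *
            ∫ t in (0:ℝ)..r, Real.exp ((2 / (n - 1 : ℝ)) * f t) * (sn' t) ^ 2 :=
  integrating_factor_estimate_general H n r₀ sn sn' hsn hsn' hsnpos ψ ψ' f f' hψ hf hineq hbdry
end
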